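/- arXiv:1912.04027 — 2 statements merged into one kernel-verified Lean document; each statement's English description precedes it below -/
import Mathlib

section
/- Let M be a topological space, φ : M × ℝ → M a flow on M, and W ⊂ M an open set such that every egress point of W is a strict egress point (W⁻ = W⁻⁻). Then the exit map m(x) = φ(x, σ(x)) is a continuous map from {x ∈ W ∪ W⁻ : σ(x) < ∞} into the set of egress points W⁻, and m(x) = x for every x ∈ W⁻. -/
open scoped ENNReal

/-- The set of egress points of an open set `W` with respect to the flow `φ`. -/
def flowEgress {M : Type*} [TopologicalSpace M] (φ : M → ℝ → M) (W : Set M) : Set M :=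
  {x ∈ frontier W | ∃ ε > (0 : ℝ), ∀ t ∈ Set.Ioo (-ε) (0 : ℝ), φ x t ∈ W}

/-- The set of strict egress points of `W` with respect to the flow `φ`. -/
def flowStrictEgress {M : Type*} [TopologicalSpace M] (φ : M → ℝ → M) (W : Set M) : Set M :=
  {x ∈ flowEgress φ W | ∃ ε > (0 : ℝ), ∀ t ∈ Set.Ioo (0 : ℝ) ε, φ x t ∉ W ∪ frontier W}

/-- The egress time `σ(x) = sup {τ ≥ 0 : φ x t ∈ W for all t ∈ [0, τ)}`, valued in `ℝ≥0∞`. -/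
noncomputable def flowEgressTime {M : Type*} [TopologicalSpace M] (φ : M → ℝ → M)
    (W : Set M) (x : M) : ℝ≥0∞ :=
  sSup {τ : ℝ≥0∞ | ∀ t : ℝ, 0 ≤ t → ENNReal.ofReal t < τ → φ x t ∈ W}

/-!
Since `W` is open, the tube lemma makes the egress time `σ` lower semicontinuous: if the
orbit of `x₀` stays in `W` on `[0, r]`, so do the orbits of all points near `x₀`.
If the orbit of `x₀` leaves `closure W` at times arbitrarily close after `σ(x₀)`, which is
what strict egress guarantees, then leaving `closure W` at such a time is an open condition
on `x₀`, so `σ` is upper semicontinuous there. Hence `σ`, and with it the exit map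
`x ↦ φ(x, σ(x))`, is continuous wherever `σ` is finite and the exit point is a strict egress
point; the hypothesis `W⁻ = W⁻⁻` says that this is every point of `W ∪ W⁻` with `σ < ∞`.
-/

open Filter Topology Set Function

section EgressTime

variable {M : Type*} [TopologicalSpace M] {φ : M → ℝ → M} {W : Set M} {x : M}

lemma mem_of_ofReal_lt_flowEgressTime {t : ℝ} (ht : 0 ≤ t)
    (h : ENNReal.ofReal t < flowEgressTime φ W x) : φ x t ∈ W := by
  obtain ⟨τ, hτ, hlt⟩ := lt_sSup_iff.mp h
  exact hτ t ht hlt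

lemma mem_of_mem_Ico_toReal_flowEgressTime (hfin : flowEgressTime φ W x ≠ ⊤) {t : ℝ}
    (ht : t ∈ Ico 0 (flowEgressTime φ W x).toReal) : φ x t ∈ W :=
  mem_of_ofReal_lt_flowEgressTime ht.1 ((ENNReal.ofReal_lt_iff_lt_toReal ht.1 hfin).2 ht.2)

lemma flowEgressTime_le_of_notMem {t : ℝ} (ht : 0 ≤ t) (h : φ x t ∉ W) :
    flowEgressTime φ W x ≤ ENNReal.ofReal t :=
  not_lt.1 fun hlt => h (mem_of_ofReal_lt_flowEgressTime ht hlt)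

lemma ofReal_le_flowEgressTime {r : ℝ} (h : ∀ t ∈ Ico 0 r, φ x t ∈ W) :
    ENNReal.ofReal r ≤ flowEgressTime φ W x :=
  le_sSup fun t ht hlt => h t ⟨ht, (ENNReal.ofReal_lt_ofReal_iff'.1 hlt).1⟩

lemma flowEgressTime_eq_zero_of_notMem (hφ0 : φ x 0 = x) (hx : x ∉ W) :
    flowEgressTime φ W x = 0 := by
  simpa using flowEgressTime_le_of_notMem le_rfl (by rwa [hφ0] : φ x 0 ∉ W)

lemma notMem_of_mem_flowEgress (hW : IsOpen W) (hx : x ∈ flowEgress φ W) : x ∉ W :=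
  (hW.frontier_eq ▸ hx.1).2

lemma flow_flowEgressTime_of_mem_flowEgress (hφ0 : φ x 0 = x) (hW : IsOpen W)
    (hx : x ∈ flowEgress φ W) : φ x (flowEgressTime φ W x).toReal = x := by
  rw [flowEgressTime_eq_zero_of_notMem hφ0 (notMem_of_mem_flowEgress hW hx),
    ENNReal.toReal_zero, hφ0]

lemma flowEgressTime_pos (hφx : Continuous (φ x)) (hφ0 : φ x 0 = x) (hW : IsOpen W)
    (hx : x ∈ W) : 0 < flowEgressTime φ W x := by
  have hnear : ∀ᶠ t in 𝓝 0, φ x t ∈ W :=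
    hφx.continuousAt.eventually_mem (hW.mem_nhds (by rwa [hφ0]))
  obtain ⟨r, hr, hsub⟩ := exists_Ico_subset_of_mem_nhds hnear ⟨1, one_pos⟩
  exact (ENNReal.ofReal_pos.2 hr).trans_le (ofReal_le_flowEgressTime hsub)

lemma flow_flowEgressTime_mem_closure (hφx : Continuous (φ x))
    (hfin : flowEgressTime φ W x ≠ ⊤) (hpos : 0 < flowEgressTime φ W x) :
    φ x (flowEgressTime φ W x).toReal ∈ closure W := by
  have hs : 0 < (flowEgressTime φ W x).toReal := ENNReal.toReal_pos hpos.ne' hfin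
  have hcl : (flowEgressTime φ W x).toReal ∈ closure (Ico 0 (flowEgressTime φ W x).toReal) := by
    rw [closure_Ico hs.ne]
    exact ⟨hs.le, le_rfl⟩
  exact map_mem_closure hφx hcl fun t ht => mem_of_mem_Ico_toReal_flowEgressTime hfin ht

lemma flow_flowEgressTime_notMem (hφx : Continuous (φ x)) (hW : IsOpen W)
    (hfin : flowEgressTime φ W x ≠ ⊤) : φ x (flowEgressTime φ W x).toReal ∉ W := by
  set s := (flowEgressTime φ W x).toReal
  intro hmem
  obtain ⟨u, hsu, hu⟩ := exists_Ico_subset_of_mem_nhds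
    (hφx.continuousAt.eventually_mem (hW.mem_nhds hmem)) ⟨s + 1, lt_add_one s⟩
  have hle : ENNReal.ofReal u ≤ flowEgressTime φ W x := by
    refine ofReal_le_flowEgressTime fun t ht => ?_
    rcases lt_or_ge t s with hts | hst
    · exact mem_of_mem_Ico_toReal_flowEgressTime hfin ⟨ht.1, hts⟩
    · exact hu ⟨hst, ht.2⟩
  linarith [(ENNReal.ofReal_le_iff_le_toReal hfin).1 hle]

lemma flow_flowEgressTime_mem_flowEgress (hφx : Continuous (φ x)) (hφ0 : φ x 0 = x)
    (hadd : ∀ s t, φ x (s + t) = φ (φ x s) t) (hW : IsOpen W) (hx : x ∈ W)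
    (hfin : flowEgressTime φ W x ≠ ⊤) :
    φ x (flowEgressTime φ W x).toReal ∈ flowEgress φ W := by
  have hpos := flowEgressTime_pos hφx hφ0 hW hx
  refine ⟨hW.frontier_eq ▸ ⟨flow_flowEgressTime_mem_closure hφx hfin hpos,
    flow_flowEgressTime_notMem hφx hW hfin⟩, _, ENNReal.toReal_pos hpos.ne' hfin, fun t ht => ?_⟩
  rw [← hadd]
  exact mem_of_mem_Ico_toReal_flowEgressTime hfin ⟨by linarith [ht.1], by linarith [ht.2]⟩

lemma eventually_flow_notMem_closure_of_mem_flowStrictEgress {s : ℝ}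
    (hadd : ∀ t, φ x (s + t) = φ (φ x s) t) (h : φ x s ∈ flowStrictEgress φ W) :
    ∀ᶠ t in 𝓝[>] s, φ x t ∉ closure W := by
  obtain ⟨-, ε, hε, hout⟩ := h
  filter_upwards [Ioo_mem_nhdsGT (lt_add_of_pos_right s hε)] with t ht
  have := hout (t - s) ⟨sub_pos.2 ht.1, by linarith [ht.2]⟩
  rwa [← hadd, add_sub_cancel, ← closure_eq_self_union_frontier] at this

lemma lowerSemicontinuous_flowEgressTime (hφ : Continuous (uncurry φ)) (hW : IsOpen W) :
    LowerSemicontinuous (flowEgressTime φ W) := by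
  intro x₀ y hy
  obtain ⟨r, -, hyr, hrσ⟩ := ENNReal.lt_iff_exists_real_btwn.1 hy
  have hsub : ({x₀} : Set M) ×ˢ Icc 0 r ⊆ uncurry φ ⁻¹' W := by
    rintro ⟨z, t⟩ ⟨rfl, ht⟩
    exact mem_of_ofReal_lt_flowEgressTime ht.1 ((ENNReal.ofReal_le_ofReal ht.2).trans_lt hrσ)
  obtain ⟨u, v, hu, -, hx₀u, hv, huv⟩ :=
    generalized_tube_lemma isCompact_singleton isCompact_Icc (hW.preimage hφ) hsub
  filter_upwards [hu.mem_nhds (hx₀u rfl)] with x hx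
  exact hyr.trans_le (ofReal_le_flowEgressTime fun t ht => @huv (x, t) ⟨hx, hv ⟨ht.1, ht.2.le⟩⟩)

lemma upperSemicontinuousAt_flowEgressTime (hφ : Continuous (uncurry φ)) {x₀ : M}
    (hexit : ∃ᶠ t in 𝓝[>] (flowEgressTime φ W x₀).toReal, φ x₀ t ∉ closure W) :
    UpperSemicontinuousAt (flowEgressTime φ W) x₀ := by
  intro y hy
  obtain ⟨r, -, hσr, hry⟩ := ENNReal.lt_iff_exists_real_btwn.1 hy
  obtain ⟨t, hout, ht⟩ :=
    (hexit.and_eventually (Ioo_mem_nhdsGT (ENNReal.toReal_lt_of_lt_ofReal hσr))).exists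
  have hopen : IsOpen {x | φ x t ∉ closure W} :=
    isClosed_closure.isOpen_compl.preimage (hφ.uncurry_right t)
  filter_upwards [hopen.mem_nhds hout] with x hx
  have ht0 : 0 ≤ t := ENNReal.toReal_nonneg.trans ht.1.le
  exact (flowEgressTime_le_of_notMem ht0 fun h => hx (subset_closure h)).trans_lt
    ((ENNReal.ofReal_le_ofReal ht.2.le).trans_lt hry)

lemma continuousAt_flowEgressTime (hφ : Continuous (uncurry φ)) (hW : IsOpen W)
    (hadd : ∀ s t, φ x (s + t) = φ (φ x s) t)
    (hx : φ x (flowEgressTime φ W x).toReal ∈ flowStrictEgress φ W) :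
    ContinuousAt (flowEgressTime φ W) x :=
  continuousAt_iff_lower_upperSemicontinuousAt.2
    ⟨lowerSemicontinuous_flowEgressTime hφ hW x, upperSemicontinuousAt_flowEgressTime hφ
      (eventually_flow_notMem_closure_of_mem_flowStrictEgress (hadd _) hx).frequently⟩

end EgressTime

/-- If `W⁻ = W⁻⁻`, the exit map `m(x) = φ(x, σ(x))` is continuous on the set of
points of `W ∪ W⁻` with finite egress time, maps this set into the set `W⁻` of
egress points, and fixes every egress point. -/
theorem exitMap_continuousOn
    {M : Type*} [TopologicalSpace M] (φ : M → ℝ → M)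
    (hφcont : Continuous fun p : M × ℝ => φ p.1 p.2)
    (hφ0 : ∀ x, φ x 0 = x)
    (hφadd : ∀ x t s, φ x (t + s) = φ (φ x t) s)
    (W : Set M) (hWopen : IsOpen W)
    (hWeq : flowEgress φ W = flowStrictEgress φ W) :
    ContinuousOn (fun x => φ x (flowEgressTime φ W x).toReal)
      {x | x ∈ W ∪ flowEgress φ W ∧ flowEgressTime φ W x ≠ ⊤} ∧
    Set.MapsTo (fun x => φ x (flowEgressTime φ W x).toReal)
      {x | x ∈ W ∪ flowEgress φ W ∧ flowEgressTime φ W x ≠ ⊤} (flowEgress φ W) ∧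
    ∀ x ∈ flowEgress φ W, φ x (flowEgressTime φ W x).toReal = x := by
  have hfix : ∀ x ∈ flowEgress φ W, φ x (flowEgressTime φ W x).toReal = x :=
    fun x hx => flow_flowEgressTime_of_mem_flowEgress (hφ0 x) hWopen hx
  have hmaps : Set.MapsTo (fun x => φ x (flowEgressTime φ W x).toReal)
      {x | x ∈ W ∪ flowEgress φ W ∧ flowEgressTime φ W x ≠ ⊤} (flowEgress φ W) := by
    rintro x ⟨hx | hx, hfin⟩
    · exact flow_flowEgressTime_mem_flowEgress (hφcont.uncurry_left x) (hφ0 x) (hφadd x)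
        hWopen hx hfin
    · simpa only [hfix x hx] using hx
  refine ⟨fun x hx => ContinuousAt.continuousWithinAt ?_, hmaps, hfix⟩
  have hσ := continuousAt_flowEgressTime hφcont hWopen (hφadd x) (hWeq ▸ hmaps hx)
  exact hφcont.continuousAt.comp
    (continuousAt_id.prodMk ((ENNReal.continuousAt_toReal hx.2).comp hσ))
end

section
/- Under the hypotheses of Theorem 2.13 — M a topological space, Φ a continuous semi-process on M, W ⊂ M × ℝ open with W⁻ = W⁻⁻ and W₀⁻⁻ ≠ ∅, x₀ a uniformly Lyapunov stable equilibrium, U open with x₀ ∈ U and closure(U) × ℝ ⊂ W, and Γ : [0,1] → M × ℝ a continuous path with Γ(s) ∈ W₀ for s ∈ (0,1), Γ(0) = (x₀,0), Γ(1) ∈ W₀⁻⁻ — there exists a point (x,0) on the path Γ such that σ(x) = ∞ (the half-trajectory of x never leaves W) and Φ_{0,t}(x) does not converge to x₀ as t → ∞. -/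
/-! Trajectories through a neighbourhood of the uniformly stable equilibrium `x₀` stay in
`U × ℝ ⊆ W`, so every point whose trajectory stays in `W` and converges to `x₀` lies in the
interior of `{σ = ∞}`; this is the case for `x₀ = Γ(0)`. On the other hand, since all egress
points are strict, every `(x, 0) ∈ W` with `σ(x) < ∞` has a trajectory that enters the exterior
of `W`, which is an open condition on `x`; this also holds at the strict egress point `Γ(1)`.
The image of the path is connected, so it is not covered by these two disjoint open sets, and a
point of the path outside both has `σ = ∞` without converging to `x₀`. -/

open scoped ENNReal

/-- The egress time of `x` (with initial time `0`) from `W ⊆ M × ℝ` for the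
semi-process `Φ` (written `Φ x t₀ t` for `Φ_{t₀,t}(x)`):
`σ(x) = sup {τ ≥ 0 : (Φ_{0,t}(x), t) ∈ W for all t ∈ [0, τ)}`, valued in `ℝ≥0∞`.
For `(x, 0) ∈ ∂W` this supremum equals `0`. -/
noncomputable def spEgressTime {M : Type*}
    (Φ : M → ℝ → ℝ → M) (W : Set (M × ℝ)) (x : M) : ℝ≥0∞ :=
  sSup {τ : ℝ≥0∞ | ∀ t : ℝ, 0 ≤ t → ENNReal.ofReal t < τ → (Φ x 0 t, t) ∈ W}

/-- Egress points of `W ⊆ M × ℝ` for the semi-process `Φ`: boundary points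
`(x₁, t₁)` such that either `t₁ > 0` and `(x₁, t₁) = (Φ_{0,σ(x)}(x), σ(x))` for some
`(x, 0) ∈ W`, or `t₁ = 0` and the forward trajectory of `x₁` leaves `W ∪ ∂W`
immediately. -/
def spEgress {M : Type*} [TopologicalSpace M]
    (Φ : M → ℝ → ℝ → M) (W : Set (M × ℝ)) : Set (M × ℝ) :=
  {p ∈ frontier W |
    (0 < p.2 ∧ ∃ x : M, (x, (0 : ℝ)) ∈ W ∧ spEgressTime Φ W x ≠ ⊤ ∧
      p.2 = (spEgressTime Φ W x).toReal ∧ p.1 = Φ x 0 (spEgressTime Φ W x).toReal) ∨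
    (p.2 = 0 ∧ ∃ ε > (0 : ℝ), ∀ t ∈ Set.Ioo (0 : ℝ) ε, (Φ p.1 0 t, t) ∉ W ∪ frontier W)}

/-- Strict egress points of `W ⊆ M × ℝ` for the semi-process `Φ`: egress points
whose continued trajectory stays outside `W ∪ ∂W` for a positive time interval
(by the semigroup property, `(Φ_{0,σ(x)+t}(x), σ(x)+t) = (Φ_{t₁,t}(x₁), t₁ + t)`). -/
def spStrictEgress {M : Type*} [TopologicalSpace M]
    (Φ : M → ℝ → ℝ → M) (W : Set (M × ℝ)) : Set (M × ℝ) :=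
  {p ∈ spEgress Φ W |
    ∃ ε > (0 : ℝ), ∀ t ∈ Set.Ioo (0 : ℝ) ε, (Φ p.1 p.2 t, p.2 + t) ∉ W ∪ frontier W}

/-- The section `S_τ = {(x, t) ∈ S : t = τ}` of a subset of the extended phase space. -/
def timeSection {M : Type*} (S : Set (M × ℝ)) (τ : ℝ) : Set (M × ℝ) :=
  {p ∈ S | p.2 = τ}

open Set Filter Topology

section EgressTime

variable {M : Type*} {Φ : M → ℝ → ℝ → M} {W : Set (M × ℝ)} {x : M}

lemma mem_of_ofReal_lt_spEgressTime {t : ℝ} (ht : 0 ≤ t)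
    (h : ENNReal.ofReal t < spEgressTime Φ W x) : (Φ x 0 t, t) ∈ W := by
  obtain ⟨τ, hτ, htτ⟩ := lt_sSup_iff.1 h
  exact hτ t ht htτ

lemma spEgressTime_le_of_notMem {t : ℝ} (ht : 0 ≤ t) (h : (Φ x 0 t, t) ∉ W) :
    spEgressTime Φ W x ≤ ENNReal.ofReal t :=
  sSup_le fun _ hτ => not_lt.1 fun htτ => h (hτ t ht htτ)

lemma ofReal_le_spEgressTime {τ : ℝ} (h : ∀ t, 0 ≤ t → t < τ → (Φ x 0 t, t) ∈ W) :
    ENNReal.ofReal τ ≤ spEgressTime Φ W x :=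
  le_sSup fun t ht htτ => h t ht ((ENNReal.ofReal_lt_ofReal_iff_of_nonneg ht).1 htτ)

lemma spEgressTime_eq_top_iff :
    spEgressTime Φ W x = ⊤ ↔ ∀ t, 0 ≤ t → (Φ x 0 t, t) ∈ W :=
  ⟨fun h _ ht => mem_of_ofReal_lt_spEgressTime ht (h ▸ ENNReal.ofReal_lt_top),
    fun h => top_le_iff.1 (le_sSup fun t ht _ => h t ht)⟩

lemma spEgressTime_ne_top_of_notMem {t : ℝ} (ht : 0 ≤ t) (h : (Φ x 0 t, t) ∉ W) :
    spEgressTime Φ W x ≠ ⊤ :=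
  ne_top_of_le_ne_top ENNReal.ofReal_ne_top (spEgressTime_le_of_notMem ht h)

end EgressTime

section Topological

variable {M : Type*} [TopologicalSpace M] {Φ : M → ℝ → ℝ → M} {W : Set (M × ℝ)} {x : M}

lemma continuousOn_trajectory (hΦ : ContinuousOn (fun p : M × ℝ => Φ p.1 0 p.2) {p | 0 ≤ p.2})
    (x : M) : ContinuousOn (fun t => (Φ x 0 t, t)) (Ici 0) :=
  (hΦ.comp (continuous_const.prodMk continuous_id).continuousOn fun _ ht => ht).prodMk
    continuousOn_id

lemma ofReal_lt_spEgressTime_of_mem_Icc (hW : IsOpen W)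
    (hc : ContinuousOn (fun t => (Φ x 0 t, t)) (Ici 0)) {τ : ℝ} (hτ : 0 ≤ τ)
    (h : ∀ t ∈ Icc 0 τ, (Φ x 0 t, t) ∈ W) : ENNReal.ofReal τ < spEgressTime Φ W x := by
  have hτW : ∀ᶠ t in 𝓝[≥] τ, (Φ x 0 t, t) ∈ W :=
    ((hc τ hτ).mono (Ici_subset_Ici.2 hτ)).tendsto.eventually_mem
      (hW.mem_nhds (h τ ⟨hτ, le_rfl⟩))
  obtain ⟨u, hτu, hu⟩ := mem_nhdsGE_iff_exists_Ico_subset.1 hτW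
  calc ENNReal.ofReal τ < ENNReal.ofReal u :=
        ENNReal.ofReal_lt_ofReal_iff'.2 ⟨hτu, hτ.trans_lt hτu⟩
    _ ≤ spEgressTime Φ W x := ofReal_le_spEgressTime fun t ht htu =>
      (lt_or_ge t τ).elim (fun htτ => h t ⟨ht, htτ.le⟩) fun hτt => hu ⟨hτt, htu⟩

lemma mk_toReal_spEgressTime_mem_spEgress (hW : IsOpen W) (hΦ0 : Φ x 0 0 = x)
    (hc : ContinuousOn (fun t => (Φ x 0 t, t)) (Ici 0)) (hx : (x, 0) ∈ W)
    (hσ : spEgressTime Φ W x ≠ ⊤) :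
    (Φ x 0 (spEgressTime Φ W x).toReal, (spEgressTime Φ W x).toReal) ∈ spEgress Φ W := by
  set τ := (spEgressTime Φ W x).toReal
  have hpos : 0 < τ := by
    refine ENNReal.toReal_pos (ne_bot_of_gt (ofReal_lt_spEgressTime_of_mem_Icc hW hc le_rfl ?_)) hσ
    rintro t ⟨ht₀, ht₀'⟩
    rwa [le_antisymm ht₀' ht₀, hΦ0]
  have hbefore : ∀ t ∈ Ico 0 τ, (Φ x 0 t, t) ∈ W := fun t ht =>
    mem_of_ofReal_lt_spEgressTime ht.1 ((ENNReal.ofReal_lt_iff_lt_toReal ht.1 hσ).2 ht.2)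
  have hout : (Φ x 0 τ, τ) ∉ W := fun hτ => by
    refine (ofReal_lt_spEgressTime_of_mem_Icc hW hc hpos.le fun t ht => ?_).ne
      (ENNReal.ofReal_toReal hσ)
    rcases ht.2.lt_or_eq with htτ | rfl
    exacts [hbefore t ⟨ht.1, htτ⟩, hτ]
  have hcl : (Φ x 0 τ, τ) ∈ closure W := by
    refine ((hc τ hpos.le).mono Ico_subset_Ici_self).mem_closure ?_ hbefore
    rw [closure_Ico hpos.ne]
    exact ⟨hpos.le, le_rfl⟩
  rw [spEgress, hW.frontier_eq]
  exact ⟨⟨hcl, hout⟩, Or.inl ⟨hpos, x, hx, hσ, rfl, rfl⟩⟩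

lemma exists_pos_notMem_closure_of_mem_spStrictEgress {p : M × ℝ}
    (hp : p ∈ spStrictEgress Φ W) : ∃ t > 0, (Φ p.1 p.2 t, p.2 + t) ∉ closure W := by
  obtain ⟨-, ε, hε, hleave⟩ := hp
  refine ⟨ε / 2, half_pos hε, ?_⟩
  rw [closure_eq_self_union_frontier]
  exact hleave _ ⟨half_pos hε, half_lt_self hε⟩

lemma exists_notMem_closure_of_spEgressTime_ne_top (hW : IsOpen W)
    (hΦ0 : Φ x 0 0 = x) (hΦadd : ∀ t s : ℝ, 0 ≤ t → 0 ≤ s → Φ x 0 (t + s) = Φ (Φ x 0 t) t s)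
    (hc : ContinuousOn (fun t => (Φ x 0 t, t)) (Ici 0))
    (hstrict : spEgress Φ W ⊆ spStrictEgress Φ W) (hx : (x, 0) ∈ W)
    (hσ : spEgressTime Φ W x ≠ ⊤) : ∃ t ≥ 0, (Φ x 0 t, t) ∉ closure W := by
  obtain ⟨s, hs, hleave⟩ := exists_pos_notMem_closure_of_mem_spStrictEgress
    (hstrict (mk_toReal_spEgressTime_mem_spEgress hW hΦ0 hc hx hσ))
  refine ⟨(spEgressTime Φ W x).toReal + s, add_nonneg ENNReal.toReal_nonneg hs.le, ?_⟩
  rwa [hΦadd _ _ ENNReal.toReal_nonneg hs.le]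

lemma isOpen_setOf_exists_notMem_closure
    (hΦ : ContinuousOn (fun p : M × ℝ => Φ p.1 0 p.2) {p | 0 ≤ p.2}) :
    IsOpen {x | ∃ t ≥ 0, (Φ x 0 t, t) ∉ closure W} := by
  have hunion : {x | ∃ t ≥ 0, (Φ x 0 t, t) ∉ closure W} =
      ⋃ t ≥ (0 : ℝ), (fun x => (Φ x 0 t, t)) ⁻¹' (closure W)ᶜ := by
    ext; simp
  rw [hunion]
  exact isOpen_biUnion fun t ht => isClosed_closure.isOpen_compl.preimage
    ((hΦ.comp_continuous (continuous_id.prodMk continuous_const) fun _ => ht).prodMk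
      continuous_const)

lemma eventually_spEgressTime_eq_top
    (hΦ : ContinuousOn (fun p : M × ℝ => Φ p.1 0 p.2) {p | 0 ≤ p.2}) (hW : IsOpen W)
    (hΦadd : ∀ (x : M) (t s : ℝ), 0 ≤ t → 0 ≤ s → Φ x 0 (t + s) = Φ (Φ x 0 t) t s)
    {V : Set M} (hV : IsOpen V) (htrap : ∀ y ∈ V, ∀ T ≥ 0, ∀ t ≥ 0, (Φ y T t, T + t) ∈ W)
    (hx : spEgressTime Φ W x = ⊤) {T : ℝ} (hT : 0 ≤ T) (hxT : Φ x 0 T ∈ V) :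
    ∀ᶠ x' in 𝓝 x, spEgressTime Φ W x' = ⊤ := by
  have hupto : ∀ᶠ x' in 𝓝 x, ∀ t ∈ Icc 0 T, 0 ≤ t → (Φ x' 0 t, t) ∈ W := by
    refine isCompact_Icc.eventually_forall_of_forall_eventually fun t ht => ?_
    have hg : ContinuousWithinAt (fun p : M × ℝ => (Φ p.1 0 p.2, p.2)) {p | 0 ≤ p.2} (x, t) :=
      (hΦ _ ht.1).prodMk continuousWithinAt_snd
    exact mem_nhdsWithin_iff_eventually.1 <| hg.preimage_mem_nhdsWithin <|
      hW.mem_nhds (spEgressTime_eq_top_iff.1 hx t ht.1)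
  have hatT : ∀ᶠ x' in 𝓝 x, Φ x' 0 T ∈ V :=
    (hΦ.comp_continuous (continuous_id.prodMk continuous_const) fun _ => hT).continuousAt
      |>.eventually_mem (hV.mem_nhds hxT)
  filter_upwards [hupto, hatT] with x' hx'W hx'V
  refine spEgressTime_eq_top_iff.2 fun t ht => ?_
  rcases le_or_gt t T with htT | hTt
  · exact hx'W t ⟨ht, htT⟩ ht
  · have h := htrap _ hx'V T hT (t - T) (sub_nonneg.2 hTt.le)
    rwa [← hΦadd x' T (t - T) hT (sub_nonneg.2 hTt.le), add_sub_cancel] at h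

end Topological

lemma IsPreconnected.exists_notMem_union {X : Type*} [TopologicalSpace X] {K u v : Set X}
    (hK : IsPreconnected K) (hu : IsOpen u) (hv : IsOpen v) (huv : Disjoint u v)
    (hKu : (K ∩ u).Nonempty) (hKv : (K ∩ v).Nonempty) : ∃ x ∈ K, x ∉ u ∪ v := by
  by_contra! hcover
  obtain ⟨x, hxK, hxu⟩ := hKv
  exact disjoint_left.1 huv (hK.subset_left_of_subset_union hu hv huv hcover hKu hxK) hxu

theorem exists_nonleaving_nonconverging_solution_general
    {M : Type*} [TopologicalSpace M] (Φ : M → ℝ → ℝ → M)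
    (hΦcont : ContinuousOn (fun q : M × ℝ × ℝ => Φ q.1 q.2.1 q.2.2) {q | 0 ≤ q.2.2})
    (hΦ0 : ∀ x t₀, Φ x t₀ 0 = x)
    (hΦadd : ∀ (x : M) (t₀ t s : ℝ), 0 ≤ t → 0 ≤ s →
      Φ x t₀ (t + s) = Φ (Φ x t₀ t) (t₀ + t) s)
    (W : Set (M × ℝ)) (hWopen : IsOpen W)
    (hWeq : spEgress Φ W = spStrictEgress Φ W)
    (x₀ : M)
    (hstab : ∀ U' : Set M, IsOpen U' → x₀ ∈ U' → ∃ V : Set M, IsOpen V ∧ x₀ ∈ V ∧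
      ∀ x ∈ V, ∀ t₀ ≥ (0 : ℝ), ∀ t ≥ (0 : ℝ), Φ x t₀ t ∈ U')
    (U : Set M) (hUopen : IsOpen U) (hx₀U : x₀ ∈ U)
    (hUW : (closure U) ×ˢ (Set.univ : Set ℝ) ⊆ W)
    (Γ : ℝ → M × ℝ) (hΓcont : ContinuousOn Γ (Set.Icc 0 1))
    (hΓW : ∀ s ∈ Set.Ioo (0 : ℝ) 1, Γ s ∈ timeSection W 0)
    (hΓ0 : Γ 0 = (x₀, 0))
    (hΓ1 : Γ 1 ∈ timeSection (spStrictEgress Φ W) 0) :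
    ∃ s ∈ Set.Icc (0 : ℝ) 1, ∃ x : M, Γ s = (x, 0) ∧
      spEgressTime Φ W x = ⊤ ∧
      ¬ Filter.Tendsto (fun t => Φ x 0 t) Filter.atTop (nhds x₀) := by
  have hΦ : ContinuousOn (fun p : M × ℝ => Φ p.1 0 p.2) {p | 0 ≤ p.2} :=
    hΦcont.comp (by fun_prop : Continuous fun p : M × ℝ => (p.1, (0 : ℝ), p.2)).continuousOn
      fun _ hp => hp
  have hΦadd₀ : ∀ (x : M) (t s : ℝ), 0 ≤ t → 0 ≤ s → Φ x 0 (t + s) = Φ (Φ x 0 t) t s :=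
    fun x t s ht hs => by simpa using hΦadd x 0 t s ht hs
  obtain ⟨V, hVopen, hx₀V, hV⟩ := hstab U hUopen hx₀U
  have htrap : ∀ y ∈ V, ∀ T ≥ 0, ∀ t ≥ 0, (Φ y T t, T + t) ∈ W :=
    fun y hy T hT t ht => hUW ⟨subset_closure (hV y hy T hT t ht), trivial⟩
  set O := {x | ∃ t ≥ 0, (Φ x 0 t, t) ∉ closure W}
  set S := interior {x | spEgressTime Φ W x = ⊤}
  have hOS : Disjoint O S := disjoint_left.2 fun x ⟨t, ht, hout⟩ hxS =>
    spEgressTime_ne_top_of_notMem ht (fun h => hout (subset_closure h))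
      (interior_subset hxS : x ∈ {x | spEgressTime Φ W x = ⊤})
  have hΓ1O : (Γ 1).1 ∈ O := by
    obtain ⟨t, ht, hout⟩ := exists_pos_notMem_closure_of_mem_spStrictEgress hΓ1.1
    rw [hΓ1.2, zero_add] at hout
    exact ⟨t, ht.le, hout⟩
  have hx₀ : spEgressTime Φ W x₀ = ⊤ :=
    spEgressTime_eq_top_iff.2 fun t ht => by simpa using htrap x₀ hx₀V 0 le_rfl t ht
  have hx₀S : x₀ ∈ S := mem_interior_iff_mem_nhds.2 <|
    eventually_spEgressTime_eq_top hΦ hWopen hΦadd₀ hVopen htrap hx₀ le_rfl (by rwa [hΦ0])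
  have hK : IsPreconnected ((fun s => (Γ s).1) '' Icc 0 1) :=
    isPreconnected_Icc.image _ (continuous_fst.comp_continuousOn hΓcont)
  obtain ⟨_, ⟨s, hs, rfl⟩, hsOS⟩ :=
    hK.exists_notMem_union (isOpen_setOf_exists_notMem_closure hΦ) isOpen_interior hOS
      ⟨_, ⟨1, right_mem_Icc.2 zero_le_one, rfl⟩, hΓ1O⟩
      ⟨_, ⟨0, left_mem_Icc.2 zero_le_one, by simp [hΓ0]⟩, hx₀S⟩
  obtain ⟨hsO, hsS⟩ := not_or.1 hsOS
  have hs0 : s ≠ 0 := by rintro rfl; exact hsS (by simpa [hΓ0] using hx₀S)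
  have hs1 : s ≠ 1 := by rintro rfl; exact hsO hΓ1O
  obtain ⟨hΓsW, hΓs0⟩ := hΓW s ⟨hs.1.lt_of_ne' hs0, hs.2.lt_of_ne hs1⟩
  have hσ : spEgressTime Φ W (Γ s).1 = ⊤ := not_ne_iff.1 fun hne =>
    hsO (exists_notMem_closure_of_spEgressTime_ne_top hWopen (hΦ0 _ _) (hΦadd₀ _)
      (continuousOn_trajectory hΦ _) hWeq.subset (hΓs0 ▸ hΓsW) hne)
  refine ⟨s, hs, (Γ s).1, Prod.ext rfl hΓs0, hσ, fun htend => hsS ?_⟩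
  obtain ⟨T, hTV, hT⟩ :=
    ((htend.eventually (hVopen.mem_nhds hx₀V)).and (eventually_ge_atTop 0)).exists
  exact mem_interior_iff_mem_nhds.2 <|
    eventually_spEgressTime_eq_top hΦ hWopen hΦadd₀ hVopen htrap hσ hT hTV

/-- Under the hypotheses of Theorem 2.13, there is a point `(x, 0)` on the path `Γ`
whose half-trajectory never leaves `W` (`σ(x) = ∞`) and which does not converge
to the equilibrium `x₀`. -/
theorem exists_nonleaving_nonconverging_solution
    {M : Type*} [TopologicalSpace M] (Φ : M → ℝ → ℝ → M)
    (hΦcont : ContinuousOn (fun q : M × ℝ × ℝ => Φ q.1 q.2.1 q.2.2) {q | 0 ≤ q.2.2})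
    (hΦ0 : ∀ x t₀, Φ x t₀ 0 = x)
    (hΦadd : ∀ (x : M) (t₀ t s : ℝ), 0 ≤ t → 0 ≤ s →
      Φ x t₀ (t + s) = Φ (Φ x t₀ t) (t₀ + t) s)
    (W : Set (M × ℝ)) (hWopen : IsOpen W)
    (hW0ne : (timeSection W 0).Nonempty)
    (hWeq : spEgress Φ W = spStrictEgress Φ W)
    (hW0e : (timeSection (spStrictEgress Φ W) 0).Nonempty)
    (x₀ : M)
    (hequil : ∀ t₀ ≥ (0 : ℝ), ∀ t ≥ (0 : ℝ), Φ x₀ t₀ t = x₀)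
    (hstab : ∀ U' : Set M, IsOpen U' → x₀ ∈ U' → ∃ V : Set M, IsOpen V ∧ x₀ ∈ V ∧
      ∀ x ∈ V, ∀ t₀ ≥ (0 : ℝ), ∀ t ≥ (0 : ℝ), Φ x t₀ t ∈ U')
    (U : Set M) (hUopen : IsOpen U) (hx₀U : x₀ ∈ U)
    (hUW : (closure U) ×ˢ (Set.univ : Set ℝ) ⊆ W)
    (Γ : ℝ → M × ℝ) (hΓcont : ContinuousOn Γ (Set.Icc 0 1))
    (hΓW : ∀ s ∈ Set.Ioo (0 : ℝ) 1, Γ s ∈ timeSection W 0)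
    (hΓ0 : Γ 0 = (x₀, 0))
    (hΓ1 : Γ 1 ∈ timeSection (spStrictEgress Φ W) 0) :
    ∃ s ∈ Set.Icc (0 : ℝ) 1, ∃ x : M, Γ s = (x, 0) ∧
      spEgressTime Φ W x = ⊤ ∧
      ¬ Filter.Tendsto (fun t => Φ x 0 t) Filter.atTop (nhds x₀) :=
  exists_nonleaving_nonconverging_solution_general Φ hΦcont hΦ0 hΦadd W hWopen hWeq x₀ hstab U
    hUopen hx₀U hUW Γ hΓcont hΓW hΓ0 hΓ1
end
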